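/- arXiv:math-ph/0610010 — 2 statements merged into one kernel-verified Lean document; each statement's English description precedes it below -/
import Mathlib

section
/- Third Lie derivative formula: X_h³ α = y₁³ α''' − y₁·((φ'·α')' + 2φ'·α''), where primes denote d/dx₁ and α depends only on x₁. -/
/-! `X_h` sends a polynomial in `y₁` with coefficients depending on `x₁` to another one, raising
the degree by one, by an explicit formula for degree at most two. Since `α`, `X_h α` and `X_h² α`
have degree `0`, `1`, `2`, three applications of that formula give `X_h³ α`. -/

/-- The hamiltonian vector field `X_h = y₁ ∂/∂x₁ - φ'(x₁) ∂/∂y₁` of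
`h = y₁²/2 + φ(x₁)`, acting on functions of the plane. -/
noncomputable def Xh (φ' : ℝ → ℝ) (F : ℝ × ℝ → ℝ) : ℝ × ℝ → ℝ :=
  fun p => p.2 * fderiv ℝ F p (1, 0) - φ' p.1 * fderiv ℝ F p (0, 1)

theorem Xh_apply_of_hasFDerivAt (φ' : ℝ → ℝ) {F : ℝ × ℝ → ℝ} {L : ℝ × ℝ →L[ℝ] ℝ}
    {p : ℝ × ℝ} (hF : HasFDerivAt F L p) :
    Xh φ' F p = p.2 * L (1, 0) - φ' p.1 * L (0, 1) := by
  rw [Xh, hF.fderiv]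

theorem Xh_quadratic_in_snd (φ' e f g e' f' g' : ℝ → ℝ)
    (he : ∀ u, HasDerivAt e (e' u) u) (hf : ∀ u, HasDerivAt f (f' u) u)
    (hg : ∀ u, HasDerivAt g (g' u) u) :
    Xh φ' (fun q => q.2 ^ 2 * e q.1 + q.2 * f q.1 + g q.1)
      = fun q => q.2 ^ 3 * e' q.1 + q.2 ^ 2 * f' q.1
          + q.2 * (g' q.1 - 2 * φ' q.1 * e q.1) - φ' q.1 * f q.1 := by
  funext p
  have hfst {a a' : ℝ → ℝ} (ha : ∀ u, HasDerivAt a (a' u) u) :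
      HasFDerivAt (fun q : ℝ × ℝ => a q.1) (a' p.1 • ContinuousLinearMap.fst ℝ ℝ ℝ) p :=
    (ha p.1).comp_hasFDerivAt p hasFDerivAt_fst
  have hsnd : HasFDerivAt (fun q : ℝ × ℝ => q.2) (ContinuousLinearMap.snd ℝ ℝ ℝ) p :=
    hasFDerivAt_snd
  rw [Xh_apply_of_hasFDerivAt φ'
    ((((hsnd.pow 2).fun_mul (hfst he)).fun_add (hsnd.fun_mul (hfst hf))).fun_add (hfst hg))]
  simp only [add_apply, smul_apply,
    ContinuousLinearMap.coe_fst', ContinuousLinearMap.coe_snd', smul_eq_mul, nsmul_eq_mul]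
  ring

/-- Third Lie derivative formula:
`X_h³ α = y₁³ α''' - y₁ ((φ' α')' + 2 φ' α'')` for `α` depending only on `x₁`. -/
theorem third_lie_derivative (φ' φ'' α α' α'' α''' : ℝ → ℝ)
    (hφ' : ∀ u, HasDerivAt φ' (φ'' u) u)
    (hα : ∀ u, HasDerivAt α (α' u) u)
    (hα' : ∀ u, HasDerivAt α' (α'' u) u)
    (hα'' : ∀ u, HasDerivAt α'' (α''' u) u) :
    ∀ p : ℝ × ℝ, Xh φ' (Xh φ' (Xh φ' (fun q => α q.1))) p
      = p.2 ^ 3 * α''' p.1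
        - p.2 * ((φ'' p.1 * α' p.1 + φ' p.1 * α'' p.1) + 2 * φ' p.1 * α'' p.1) := by
  have h0 : ∀ u, HasDerivAt (fun _ : ℝ => (0 : ℝ)) 0 u := fun u => hasDerivAt_const u 0
  have hφα' : ∀ u, HasDerivAt (fun x => -(φ' x * α' x)) (-(φ'' u * α' u + φ' u * α'' u)) u :=
    fun u => ((hφ' u).mul (hα' u)).neg
  have h1 : Xh φ' (fun q => α q.1) = fun q => q.2 ^ 2 * 0 + q.2 * α' q.1 + 0 := by
    convert Xh_quadratic_in_snd φ' _ _ _ _ _ _ h0 h0 hα using 1 <;> ext <;> simp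
  have h2 : Xh φ' (Xh φ' (fun q => α q.1))
      = fun q => q.2 ^ 2 * α'' q.1 + q.2 * 0 + -(φ' q.1 * α' q.1) := by
    rw [h1, Xh_quadratic_in_snd φ' _ _ _ _ _ _ h0 hα' h0]
    ext; ring
  intro p
  rw [h2, Xh_quadratic_in_snd φ' _ _ _ _ _ _ hα'' h0 hφα']
  ring
end

section
/- Parity vanishing descent: suppose φ' ≠ 0 (as a function, nowhere zero on the domain). If (α,φ) satisfies E_{2m,k} = 0 for all 0 ≤ k ≤ 2m, then also E_{2m-1,k} = 0 for all 0 ≤ k ≤ 2m−1. -/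
/-- Parity vanishing descent: if `φ'` is nowhere zero and `E_{2m,k} = 0` for all
`0 ≤ k ≤ 2m`, then `E_{2m-1,k} = 0` for all `0 ≤ k ≤ 2m - 1`. -/
theorem parity_descent (φ' α : ℝ → ℝ) (E : ℕ → ℤ → ℝ → ℝ) (m : ℕ) (hm : 1 ≤ m)
    (hE11 : E 1 1 = deriv α)
    (hE1 : ∀ k : ℤ, k ≠ 1 → E 1 k = 0)
    (hrec : ∀ n : ℕ, 1 ≤ n → ∀ k : ℤ,
      E (n + 1) k = fun u => deriv (E n (k - 1)) u - ((k : ℝ) + 1) * E n (k + 1) u * φ' u)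
    (hparity : ∀ n : ℕ, 1 ≤ n → ∀ k : ℤ, Odd ((n : ℤ) - k) → E n k = 0)
    (hφ' : ∀ u, φ' u ≠ 0)
    (hvanish : ∀ k : ℤ, 0 ≤ k → k ≤ 2 * (m : ℤ) → E (2 * m) k = 0) :
    ∀ k : ℤ, 0 ≤ k → k ≤ 2 * (m : ℤ) - 1 → E (2 * m - 1) k = 0 := by
  -- Step 1: E n k = 0 for all k < 0.
  have hneg : ∀ n : ℕ, 1 ≤ n → ∀ k : ℤ, k < 0 → E n k = 0 := by
    intro n hn
    induction n, hn using Nat.le_induction with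
    | base => intro k hk; exact hE1 k (by omega)
    | succ n hn ih =>
      intro k hk
      rw [hrec n hn k]
      funext u
      have h1 : E n (k - 1) = 0 := ih (k - 1) (by omega)
      rcases eq_or_lt_of_le (by omega : k ≤ -1) with h | h
      · rw [h1, h, Pi.zero_def]
        norm_num
      · have h2 : E n (k + 1) = 0 := ih (k + 1) (by omega)
        rw [h1, h2, Pi.zero_def]
        simp
  set n : ℕ := 2 * m - 1 with hn
  have hn1 : 1 ≤ n := by omega
  have hns : n + 1 = 2 * m := by omega
  have hcast : (n : ℤ) = 2 * (m : ℤ) - 1 := by omega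
  -- Step 2: key ascent: if E (2m) k = 0 and E n (k-1) = 0 then E n (k+1) = 0.
  have key : ∀ k : ℤ, 0 ≤ k → k ≤ 2 * (m : ℤ) → E n (k - 1) = 0 → E n (k + 1) = 0 := by
    intro k h0 h2 hkm
    have hv := hvanish k h0 h2
    have hr := hrec n hn1 k
    rw [hns, hv, hkm] at hr
    funext u
    show E n (k + 1) u = (0 : ℝ)
    have h0' := congrFun hr u
    rw [Pi.zero_def] at h0'
    simp at h0'
    rcases h0' with (hk' | hE') | hp
    · exfalso
      have : (0 : ℝ) ≤ (k : ℝ) := by exact_mod_cast h0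
      linarith
    · exact hE'
    · exact absurd hp (hφ' u)
  -- Step 3: odd coefficients vanish, by induction.
  have hodd : ∀ j : ℕ, (j : ℤ) ≤ (m : ℤ) - 1 → E n (2 * j + 1) = 0 := by
    intro j
    induction j with
    | zero =>
      intro _
      have hbase : E n (0 - 1) = 0 := hneg n hn1 (0 - 1) (by omega)
      have h := key 0 le_rfl (by omega) hbase
      have e : 2 * ((0 : ℕ) : ℤ) + 1 = 0 + 1 := by norm_num
      rw [e]
      exact h
    | succ j ih =>
      intro hj
      have hji : (j : ℤ) ≤ (m : ℤ) - 1 := by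
        push_cast at hj ⊢; omega
      have hprev := ih hji
      have hprev' : E n ((2 * (j : ℤ) + 2) - 1) = 0 := by
        convert hprev using 2; omega
      have h := key (2 * (j : ℤ) + 2) (by omega) (by omega) hprev'
      have e : 2 * ((j + 1 : ℕ) : ℤ) + 1 = 2 * (j : ℤ) + 2 + 1 := by push_cast; ring
      rw [e]
      exact h
  -- Step 4: conclude.
  intro k hk0 hk1
  rcases Int.even_or_odd k with he | ho
  · apply hparity n hn1 k
    rw [hcast]
    rcases he with ⟨t, ht⟩
    exact ⟨(m : ℤ) - t - 1, by omega⟩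
  · rcases ho with ⟨t, ht⟩
    have ht0 : 0 ≤ t := by omega
    have h := hodd t.toNat (by omega)
    have e : 2 * ((t.toNat : ℕ) : ℤ) + 1 = k := by omega
    rw [← e]
    exact h
end
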